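/- arXiv:2503.16781 — 6 statements merged into one kernel-verified Lean document; each statement's English description precedes it below -/
import Mathlib

section
/- For any nonempty string s, the number of distinct strings obtainable from s by removing a nonempty substring consisting of a single repeated character equals the length of s. -/
/-- A move in StrNim: remove a nonempty contiguous block of a single repeated character. -/
def StrMove {α : Type*} (s t : List α) : Prop :=
  ∃ (x : List α) (c : α) (k : ℕ) (y : List α),
    1 ≤ k ∧ s = x ++ List.replicate k c ++ y ∧ t = x ++ y

/-- N-positions of StrNim: there is a move to a position all of whose successors are N-positions
(i.e. a move to a P-position). -/
inductive NPos {α : Type*} : List α → Prop where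
  | intro {s t : List α} (h : StrMove s t) (ht : ∀ u, StrMove t u → NPos u) : NPos s

/-- P-positions of StrNim: every successor is an N-position. -/
def PPos {α : Type*} (s : List α) : Prop := ∀ t, StrMove s t → NPos t

/-!
Induct on the string. A move on `a :: s` either leaves the leading `a` in place, and is then a
move on `s` with `a` put back in front, or removes a block starting at the first letter; in the
latter case the result may be taken to be `s` stripped of its whole leading run of `a`s, since
stopping the block before the end of that run gives a string that also arises the first way.
That stripped string does not start with `a`, so it is one new successor on top of the
`|s|` old ones.
-/

open List

section StrMove

variable {α : Type*}

theorem not_strMove_nil (t : List α) : ¬StrMove [] t := by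
  rintro ⟨x, c, k, y, hk, hs, -⟩
  have := congrArg length hs
  simp only [length_nil, length_append, length_replicate] at this
  omega

theorem StrMove.cons {s t : List α} (a : α) (h : StrMove s t) : StrMove (a :: s) (a :: t) := by
  obtain ⟨x, c, k, y, hk, rfl, rfl⟩ := h
  exact ⟨a :: x, c, k, y, hk, rfl, rfl⟩

variable [DecidableEq α]

theorem eq_replicate_append_dropWhile (a : α) (s : List α) :
    s = replicate (s.takeWhile (· == a)).length a ++ s.dropWhile (· == a) := by
  conv_lhs => rw [← takeWhile_append_dropWhile (p := (· == a)) (l := s)]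
  congr 1
  rw [eq_replicate_iff]
  exact ⟨rfl, fun b hb => by simpa using mem_takeWhile_imp hb⟩

theorem strMove_cons_dropWhile (a : α) (s : List α) :
    StrMove (a :: s) (s.dropWhile (· == a)) := by
  refine ⟨[], a, (s.takeWhile (· == a)).length + 1, _, by omega, ?_, rfl⟩
  rw [replicate_succ, nil_append, cons_append, ← eq_replicate_append_dropWhile]

theorem StrMove.eq_dropWhile_or_exists_cons {a : α} {s t : List α} (h : StrMove (a :: s) t) :
    t = s.dropWhile (· == a) ∨ ∃ t', StrMove s t' ∧ a :: t' = t := by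
  obtain ⟨x, c, k, y, hk, hs, rfl⟩ := h
  rcases x with _ | ⟨b, x⟩
  · obtain ⟨k, rfl⟩ : ∃ k', k = k' + 1 := ⟨k - 1, by omega⟩
    simp only [replicate_succ, nil_append, cons_append, cons.injEq] at hs
    obtain ⟨rfl, rfl⟩ := hs
    rcases y with _ | ⟨b, y⟩
    · simp
    · by_cases hb : b = a
      · -- the block stops inside the leading run, so the same string is a move on `s`
        subst hb
        exact Or.inr ⟨y, ⟨[], b, k + 1, y, by omega, by simp [replicate_succ'], rfl⟩, rfl⟩
      · left
        rw [nil_append, dropWhile_append_of_pos (by simp),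
          dropWhile_cons_of_neg (by simpa using hb)]
  · simp only [cons_append, cons.injEq] at hs
    obtain ⟨rfl, rfl⟩ := hs
    exact Or.inr ⟨x ++ y, ⟨x, c, k, y, hk, rfl, rfl⟩, rfl⟩

theorem setOf_strMove_cons (a : α) (s : List α) :
    {t | StrMove (a :: s) t} = insert (s.dropWhile (· == a)) (cons a '' {t | StrMove s t}) := by
  ext t
  simp only [Set.mem_ofPred_eq, Set.mem_insert_iff, Set.mem_image]
  refine ⟨StrMove.eq_dropWhile_or_exists_cons, ?_⟩
  rintro (rfl | ⟨t', h, rfl⟩)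
  exacts [strMove_cons_dropWhile a s, h.cons a]

theorem dropWhile_notMem_image_cons (a : α) (s : List α) (S : Set (List α)) :
    s.dropWhile (· == a) ∉ cons a '' S := by
  rintro ⟨t, -, ht⟩
  have := head?_dropWhile_not (· == a) s
  rw [← ht] at this
  simp at this

end StrMove

theorem finite_setOf_strMove {α : Type*} (s : List α) : {t | StrMove s t}.Finite := by
  classical
  induction s with
  | nil => simp [not_strMove_nil]
  | cons a s ih =>
    rw [setOf_strMove_cons]
    exact (ih.image _).insert _

theorem ncard_setOf_strMove {α : Type*} (s : List α) : {t | StrMove s t}.ncard = s.length := by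
  classical
  induction s with
  | nil => simp [not_strMove_nil]
  | cons a s ih =>
    rw [setOf_strMove_cons, Set.ncard_insert_of_notMem (dropWhile_notMem_image_cons a s _)
      ((finite_setOf_strMove s).image _), Set.ncard_image_of_injective _ cons_injective, ih,
      length_cons]

theorem stmt_0_general {α : Type*} (s : List α) :
    {t | StrMove s t}.ncard = s.length :=
  ncard_setOf_strMove s

/-- For any nonempty string `s`, the number of distinct strings obtainable from `s` by one
StrNim move equals the length of `s`. -/
theorem stmt_0 {α : Type*} (s : List α) (hs : s ≠ []) :
    {t | StrMove s t}.ncard = s.length :=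
  stmt_0_general s
end

section
/- In StrNim, if both x·cⁱ·y and x·cʲ·y are P-positions, where c is a character and x, y are strings, then i = j. -/
lemma not_PPos_of_NPos {α : Type*} {s : List α} (hn : NPos s) : ¬ PPos s := by
  induction hn with
  | intro h ht ih =>
    rename_i s t
    intro hp
    cases hp t h with
    | intro hu hu2 => exact ih _ hu hu2

lemma move_shrink {α : Type*} (x y : List α) (c : α) {i j : ℕ} (hij : j < i) :
    StrMove (x ++ List.replicate i c ++ y) (x ++ List.replicate j c ++ y) := by
  refine ⟨x, c, i - j, List.replicate j c ++ y, by omega, ?_, by simp⟩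
  have : List.replicate i c = List.replicate (i - j) c ++ List.replicate j c := by
    rw [← List.replicate_add]; congr 1; omega
  rw [this]; simp only [List.append_assoc]

/-- If `x · cⁱ · y` and `x · cʲ · y` are both P-positions, then `i = j`. -/
theorem stmt_1 {α : Type*} (x y : List α) (c : α) (i j : ℕ)
    (hi : PPos (x ++ List.replicate i c ++ y))
    (hj : PPos (x ++ List.replicate j c ++ y)) :
    i = j := by
  rcases lt_trichotomy i j with h | h | h
  · exact absurd hi (not_PPos_of_NPos (hj _ (move_shrink x y c h)))
  · exact h
  · exact absurd hj (not_PPos_of_NPos (hi _ (move_shrink x y c h)))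
end

section
/- Let s = c₁^{x₁}···cₙ^{xₙ} be a string with cᵢ ≠ c_{i+1} and xᵢ ≥ 1, and let c be a character with c ≠ cₙ. Then there exists a unique y with 0 ≤ y ≤ |s| such that s·c^x is a P-position of StrNim if and only if x = y. -/
open List

section

variable {α : Type*}

theorem List.getLast?_append_replicate (l : List α) (a : α) {k : ℕ} (hk : k ≠ 0) :
    (l ++ replicate k a).getLast? = some a := by
  simp [getLast?_replicate, hk]

theorem List.exists_eq_append_replicate_getLast?_ne (s : List α) (c : α) :
    ∃ u r, s = u ++ replicate r c ∧ u.getLast? ≠ some c := by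
  induction s using reverseRecOn with
  | nil => exact ⟨[], 0, rfl, by simp⟩
  | append_singleton l a ih =>
    by_cases hac : a = c
    · obtain ⟨u, r, rfl, hu⟩ := ih
      exact ⟨u, r + 1, by rw [hac, append_assoc, replicate_succ'], hu⟩
    · exact ⟨l ++ [a], 0, by simp, by simpa using hac⟩

theorem List.eq_append_replicate_of_append_replicate_eq {s x : List α} {c d : α} {k m : ℕ}
    (hs : s.getLast? ≠ some c) (hk : k ≠ 0) (hm : m ≠ 0)
    (h : x ++ replicate k d = s ++ replicate m c) : k ≤ m ∧ x = s ++ replicate (m - k) c := by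
  obtain rfl : c = d := by
    simpa [getLast?_append_replicate _ _ hk, getLast?_append_replicate _ _ hm] using
      (congrArg getLast? h).symm
  rcases le_or_gt k m with hkm | hmk
  · refine ⟨hkm, append_inj_left' (t₁ := replicate k c) (t₂ := replicate k c) ?_ rfl⟩
    rw [h, append_assoc, ← replicate_add, Nat.sub_add_cancel hkm]
  · refine absurd ?_ hs
    have hs' : s = x ++ replicate (k - m) c := by
      refine (append_inj_left' (t₁ := replicate m c) (t₂ := replicate m c) ?_ rfl).symm
      rw [← h, append_assoc, ← replicate_add, Nat.sub_add_cancel hmk.le]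
    rw [hs', getLast?_append_replicate _ _ (by omega)]

theorem StrMove.length_lt {s t : List α} (h : StrMove s t) : t.length < s.length := by
  obtain ⟨x, c, k, y, hk, rfl, rfl⟩ := h
  simp only [length_append, length_replicate]
  omega

theorem strMove_append_replicate (s : List α) (c : α) {a b : ℕ} (h : b < a) :
    StrMove (s ++ replicate a c) (s ++ replicate b c) := by
  refine ⟨s ++ replicate b c, c, a - b, [], by omega, ?_, by simp⟩
  rw [append_nil, append_assoc, ← replicate_add, Nat.add_sub_cancel' h.le]

theorem StrMove.append_replicate_cases {s t : List α} {c : α} {n : ℕ}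
    (hs : s.getLast? ≠ some c) (h : StrMove (s ++ replicate n c) t) :
    (∃ s', StrMove s s' ∧ t = s' ++ replicate n c) ∨ ∃ m < n, t = s ++ replicate m c := by
  obtain ⟨x, d, k, y, hk, heq, rfl⟩ := h
  rcases append_eq_append_iff.1 heq with ⟨as, hx, hrep⟩ | ⟨bs, rfl, rfl⟩
  · obtain ⟨hlen, has, hy⟩ := replicate_eq_append_iff.1 hrep
    rcases eq_or_ne as [] with rfl | has0
    · rw [append_nil] at hx
      exact .inl ⟨x, ⟨x, d, k, [], hk, by rw [hx, append_nil], (append_nil x).symm⟩, by simp [hrep]⟩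
    · rw [has] at hx
      obtain ⟨hkm, rfl⟩ :=
        eq_append_replicate_of_append_replicate_eq hs (by omega) (by simpa using has0) hx
      refine .inr ⟨as.length - k + y.length, by omega, ?_⟩
      rw [append_assoc, replicate_add, ← hy]
  · exact .inl ⟨x ++ bs, ⟨x, d, k, bs, hk, rfl, rfl⟩, by simp⟩

theorem pPos_or_nPos (s : List α) : PPos s ∨ NPos s := by
  by_cases h : PPos s
  · exact .inl h
  · obtain ⟨t, hst, ht⟩ : ∃ t, StrMove s t ∧ ¬ NPos t := by simpa [PPos] using h
    have := hst.length_lt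
    exact .inr (.intro hst ((pPos_or_nPos t).resolve_right ht))
termination_by s.length

theorem PPos.not_nPos {s : List α} (hs : PPos s) : ¬ NPos s := by
  rintro ⟨hst, ht⟩
  have := hst.length_lt
  exact PPos.not_nPos ht (hs _ hst)
termination_by s.length

theorem PPos.eq_of_append_replicate {s : List α} {c : α} {a b : ℕ}
    (ha : PPos (s ++ replicate a c)) (hb : PPos (s ++ replicate b c)) : a = b := by
  by_contra hab
  rcases Nat.lt_or_gt_of_ne hab with h | h
  · exact hb.not_nPos (.intro (strMove_append_replicate s c h) ha)
  · exact ha.not_nPos (.intro (strMove_append_replicate s c h) hb)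

theorem exists_pPos_append_replicate {s : List α} {c : α} (hs : s.getLast? ≠ some c) :
    ∃ y ≤ s.length, PPos (s ++ replicate y c) := by
  by_cases hshort : ∃ y < s.length, PPos (s ++ replicate y c)
  · obtain ⟨y, hy, hP⟩ := hshort
    exact ⟨y, hy.le, hP⟩
  push Not at hshort
  refine ⟨s.length, le_rfl, fun t hst => ?_⟩
  rcases hst.append_replicate_cases hs with ⟨s', hss', rfl⟩ | ⟨m, hm, rfl⟩
  · refine (pPos_or_nPos _).resolve_left fun hP => ?_
    obtain ⟨u, r, rfl, hu⟩ := exists_eq_append_replicate_getLast?_ne s' c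
    have hlen : u.length + r < s.length := by simpa using hss'.length_lt
    obtain ⟨y, hy, hyP⟩ := exists_pPos_append_replicate hu
    rw [append_assoc, ← replicate_add] at hP
    have := hP.eq_of_append_replicate hyP
    omega
  · exact (pPos_or_nPos _).resolve_left (hshort m hm)
termination_by s.length

theorem getLast?_flatten_map_replicate (runs : List (α × ℕ)) (hpos : ∀ p ∈ runs, 1 ≤ p.2) :
    (runs.map fun p => replicate p.2 p.1).flatten.getLast? = runs.getLast?.map Prod.fst := by
  induction runs using reverseRecOn with
  | nil => rfl
  | append_singleton l p _ =>
    simp [getLast?_append_replicate _ _ (show p.2 ≠ 0 by grind)]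

end

theorem stmt_2_general {α : Type*} (runs : List (α × ℕ)) (c : α)
    (hpos : ∀ p ∈ runs, 1 ≤ p.2)
    (hlast : ∀ p, runs.getLast? = some p → p.1 ≠ c)
    (s : List α) (hs : s = (runs.map (fun p => List.replicate p.2 p.1)).flatten) :
    ∃! y : ℕ, y ≤ s.length ∧ ∀ x : ℕ, (PPos (s ++ List.replicate x c) ↔ x = y) := by
  have hc : s.getLast? ≠ some c := by
    rw [hs, getLast?_flatten_map_replicate runs hpos, ne_eq, Option.map_eq_some_iff]
    rintro ⟨p, hp, rfl⟩
    exact hlast p hp rfl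
  obtain ⟨y, hy, hP⟩ := exists_pPos_append_replicate hc
  refine ⟨y, ⟨hy, fun x => ⟨fun hx => hx.eq_of_append_replicate hP, fun h => h ▸ hP⟩⟩, ?_⟩
  rintro y' ⟨-, hy'⟩
  exact ((hy' y).1 hP).symm

/-- Let `s = c₁^{x₁} ⋯ cₙ^{xₙ}` with `cᵢ ≠ c_{i+1}` and `xᵢ ≥ 1`, and let `c ≠ cₙ`.
There is a unique `y` with `0 ≤ y ≤ |s|` such that `s · c^x` is a P-position iff `x = y`. -/
theorem stmt_2 {α : Type*} (runs : List (α × ℕ)) (c : α)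
    (hpos : ∀ p ∈ runs, 1 ≤ p.2)
    (hadj : runs.Chain' (fun p q => p.1 ≠ q.1))
    (hlast : ∀ p, runs.getLast? = some p → p.1 ≠ c)
    (s : List α) (hs : s = (runs.map (fun p => List.replicate p.2 p.1)).flatten) :
    ∃! y : ℕ, y ≤ s.length ∧ ∀ x : ℕ, (PPos (s ++ List.replicate x c) ↔ x = y) :=
  stmt_2_general runs c hpos hlast s hs
end

section
/- If s = c₁^{x₁}···cₙ^{xₙ} with cᵢ ≠ c_{i+1}, xᵢ ≥ 1, and x₁ + x₂ + ··· + x_{n-1} < xₙ, then s is an N-position of StrNim. -/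
lemma strMove_length {α : Type*} {s t : List α} (h : StrMove s t) : t.length < s.length := by
  obtain ⟨x, c, k, y, hk, hs, ht⟩ := h
  subst hs; subst ht; simp; omega

lemma ppos_nil {α : Type*} : PPos ([] : List α) := by
  rintro t ⟨x, c, k, y, hk, hs, ht⟩
  apply_fun List.length at hs
  simp at hs
  omega

lemma notBoth {α : Type*} : ∀ (s : List α), NPos s → PPos s → False := by
  intro s
  generalize hn : s.length = n
  induction n using Nat.strong_induction_on generalizing s with
  | _ n IH =>
    subst hn
    intro hN hP
    cases hN with
    | intro hmv hPt =>
      rename_i t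
      exact IH t.length (strMove_length hmv) t rfl (hP t hmv) hPt

lemma determinacy {α : Type*} (s : List α) : NPos s ∨ PPos s := by
  generalize hn : s.length = n
  induction n using Nat.strong_induction_on generalizing s with
  | _ n IH =>
    subst hn
    by_cases h : ∃ t, StrMove s t ∧ PPos t
    · obtain ⟨t, hmv, hPt⟩ := h
      exact Or.inl (NPos.intro hmv hPt)
    · push_neg at h
      refine Or.inr fun t hmv => ?_
      rcases IH t.length (strMove_length hmv) t rfl with hN | hP
      · exact hN
      · exact absurd hP (h t hmv)

/-- Every list decomposes as `w ++ c^j` with `w` not ending in `c`. -/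
lemma exists_suffix {α : Type*} (c : α) (r : List α) :
    ∃ w j, r = w ++ List.replicate j c ∧ w.getLast? ≠ some c := by
  induction r using List.reverseRecOn with
  | nil => exact ⟨[], 0, by simp, by simp⟩
  | append_singleton l a IH =>
    by_cases hac : a = c
    · obtain ⟨w, j, hw, hlast⟩ := IH
      refine ⟨w, j + 1, ?_, hlast⟩
      rw [hac, hw, List.replicate_succ', ← List.append_assoc]
    · refine ⟨l ++ [a], 0, by simp, ?_⟩
      rw [List.getLast?_concat]
      simpa using hac

/-- Structure of moves from `r ++ c^L` when `r` does not end with `c`. -/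
lemma move_decomp {α : Type*} {r t : List α} {c : α} {L : ℕ}
    (hr : r.getLast? ≠ some c)
    (hmv : StrMove (r ++ List.replicate L c) t) :
    (∃ m < L, t = r ++ List.replicate m c) ∨
    (∃ r', StrMove r r' ∧ t = r' ++ List.replicate L c) := by
  obtain ⟨x, d, k, y, hk, hs, ht⟩ := hmv
  rw [List.append_assoc] at hs
  rcases List.append_eq_append_iff.mp hs with ⟨a, hxa, hLc⟩ | ⟨a, har, hb⟩
  · -- x = r ++ a, rep L c = a ++ (rep k d ++ y)
    have hmem : ∀ b ∈ a ++ (List.replicate k d ++ y), b = c := fun b hb =>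
      List.eq_of_mem_replicate (by rw [hLc]; exact hb)
    have hdc : d = c := hmem d (List.mem_append_right _
      (List.mem_append_left _ (List.mem_replicate.mpr ⟨by omega, rfl⟩)))
    have harep : a = List.replicate a.length c :=
      List.eq_replicate_of_mem fun b hb => hmem b (List.mem_append_left _ hb)
    have hyrep : y = List.replicate y.length c :=
      List.eq_replicate_of_mem fun b hb =>
        hmem b (List.mem_append_right _ (List.mem_append_right _ hb))
    have hlen : L = a.length + k + y.length := by
      have := congrArg List.length hLc
      simp at this
      omega
    refine Or.inl ⟨a.length + y.length, by omega, ?_⟩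
    rw [ht, hxa, List.replicate_add, ← harep, ← hyrep, List.append_assoc]
  · -- r = x ++ a, rep k d ++ y = a ++ rep L c
    rcases List.append_eq_append_iff.mp hb with ⟨e, hae, hy⟩ | ⟨e, hka, hLc⟩
    · -- a = rep k d ++ e, y = e ++ rep L c
      refine Or.inr ⟨x ++ e, ⟨x, d, k, e, hk, by rw [har, hae, List.append_assoc], rfl⟩, ?_⟩
      rw [ht, hy, List.append_assoc]
    · -- rep k d = a ++ e, rep L c = e ++ y
      have hmema : ∀ b ∈ a, b = d := fun b hb =>
        List.eq_of_mem_replicate (by rw [hka]; exact List.mem_append_left _ hb)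
      have hmeme : ∀ b ∈ e, b = d := fun b hb =>
        List.eq_of_mem_replicate (by rw [hka]; exact List.mem_append_right _ hb)
      by_cases he : e = []
      · -- removed block is a suffix of r
        subst he
        simp only [List.append_nil] at hka
        simp only [List.nil_append] at hLc
        refine Or.inr ⟨x, ⟨x, d, k, [], hk, by rw [har, hka]; simp, by simp⟩, ?_⟩
        rw [ht, ← hLc]
      · -- e nonempty: d = c
        have hdc : d = c := by
          obtain ⟨b, hb⟩ := List.exists_mem_of_ne_nil e he
          have h1 : b = d := hmeme b hb
          have h2 : b = c :=
            List.eq_of_mem_replicate (by rw [hLc]; exact List.mem_append_left _ hb)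
          rw [← h1, h2]
        by_cases ha : a = []
        · -- removed block inside the c-block
          subst ha
          simp only [List.nil_append] at hka
          simp only [List.append_nil] at har
          have hyc : ∀ b ∈ y, b = c := fun b hb =>
            List.eq_of_mem_replicate (by rw [hLc]; exact List.mem_append_right _ hb)
          have hyrep : y = List.replicate y.length c := List.eq_replicate_of_mem hyc
          have hlen : L = k + y.length := by
            have := congrArg List.length hLc
            simp [← hka] at this
            omega
          refine Or.inl ⟨y.length, by omega, ?_⟩
          rw [ht, ← har, ← hyrep]
        · -- r would end with c: contradiction
          exfalso
          apply hr
          have harep : a = List.replicate a.length d :=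
            List.eq_replicate_of_mem hmema
          have hlen : 1 ≤ a.length := by
            rcases Nat.eq_zero_or_pos a.length with h0 | h1
            · exact absurd (List.length_eq_zero_iff.mp h0) ha
            · exact h1
          have : a = List.replicate (a.length - 1) d ++ [d] := by
            conv_lhs => rw [harep]
            rw [← List.replicate_succ']
            congr 1
            omega
          rw [har, this, hdc, ← List.append_assoc, List.getLast?_concat]

/-- Key lemma: for any `r` not ending in `c`, some `r ++ c^m` with `m ≤ |r|` is a P-position. -/
lemma key {α : Type*} : ∀ (n : ℕ) (r : List α) (c : α), r.length ≤ n →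
    r.getLast? ≠ some c →
    ∃ m ≤ r.length, PPos (r ++ List.replicate m c) := by
  intro n
  induction n with
  | zero =>
    intro r c hlen _
    have : r = [] := List.length_eq_zero_iff.mp (by omega)
    subst this
    exact ⟨0, le_refl _, by simpa using ppos_nil⟩
  | succ n IH =>
    intro r c hlen hr
    by_contra hcon
    push_neg at hcon
    have hNu : NPos (r ++ List.replicate r.length c) :=
      (determinacy _).resolve_right (hcon r.length le_rfl)
    cases hNu with
    | intro hmv hPt =>
      rename_i t
      rcases move_decomp hr hmv with ⟨m, hm, rfl⟩ | ⟨r', hmr, rfl⟩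
      · exact hcon m hm.le hPt
      · obtain ⟨w, j, rfl, hw⟩ := exists_suffix c r'
        have hlen' : w.length + j < r.length := by
          have := strMove_length hmr
          simp at this
          omega
        obtain ⟨m, hm, hPm⟩ := IH w c (by omega) hw
        have heq : (w ++ List.replicate j c) ++ List.replicate r.length c =
            w ++ List.replicate (j + r.length) c := by
          rw [List.append_assoc, ← List.replicate_add]
        rw [heq] at hPt
        have hmv2 : StrMove (w ++ List.replicate (j + r.length) c)
            (w ++ List.replicate m c) :=
          ⟨w, c, j + r.length - m, List.replicate m c, by omega, by
            rw [List.append_assoc, ← List.replicate_add]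
            congr 2
            omega, rfl⟩
        exact notBoth _ (NPos.intro hmv2 hPm) hPt

lemma chain'_last {α : Type*} {R : α → α → Prop} :
    ∀ (l : List α) (a b : α), List.Chain' R (l ++ [a, b]) → R a b := by
  intro l
  induction l with
  | nil => intro a b h; exact (List.isChain_cons_cons.mp h).1
  | cons x l IH =>
    intro a b h
    rw [List.cons_append] at h
    exact IH a b h.tail

/-- If `s = c₁^{x₁} ⋯ cₙ^{xₙ}` with `cᵢ ≠ c_{i+1}`, `xᵢ ≥ 1` and
`x₁ + ⋯ + x_{n-1} < xₙ`, then `s` is an N-position. -/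
theorem stmt_3 {α : Type*} (rs : List (α × ℕ)) (p : α × ℕ)
    (hpos : ∀ q ∈ rs ++ [p], 1 ≤ q.2)
    (hadj : (rs ++ [p]).Chain' (fun q r => q.1 ≠ r.1))
    (hsum : (rs.map Prod.snd).sum < p.2) :
    NPos (((rs ++ [p]).map (fun q => List.replicate q.2 q.1)).flatten) := by
  have hgoal : ((rs ++ [p]).map (fun q => List.replicate q.2 q.1)).flatten
      = (rs.map (fun q => List.replicate q.2 q.1)).flatten ++ List.replicate p.2 p.1 := by
    simp
  rw [hgoal]
  have hlenr : ((rs.map (fun q => List.replicate q.2 q.1)).flatten).length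
      = (rs.map Prod.snd).sum := by
    simp [List.length_flatten, List.map_map, Function.comp_def]
  have hr : ((rs.map (fun q => List.replicate q.2 q.1)).flatten).getLast? ≠ some p.1 := by
    cases rs using List.reverseRecOn with
    | nil => simp
    | append_singleton l q =>
      have hq2 : 1 ≤ q.2 := hpos q (by simp)
      have hqp : q.1 ≠ p.1 := by
        have h2 := hadj
        rw [List.append_assoc] at h2
        exact chain'_last l q p h2
      have hfq : List.replicate q.2 q.1 = List.replicate (q.2 - 1) q.1 ++ [q.1] := by
        rw [← List.replicate_succ']
        congr 1
        omega
      have hw : ((l ++ [q]).map (fun q => List.replicate q.2 q.1)).flatten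
          = ((l.map (fun q => List.replicate q.2 q.1)).flatten
              ++ List.replicate (q.2 - 1) q.1) ++ [q.1] := by
        simp only [List.map_append, List.flatten_append, List.map_cons, List.map_nil,
          List.flatten_cons, List.flatten_nil, List.append_nil]
        rw [hfq, ← List.append_assoc]
      rw [hw, List.getLast?_concat]
      simpa using hqp
  obtain ⟨m, hm, hP⟩ := key _ (rs.map (fun q => List.replicate q.2 q.1)).flatten p.1 le_rfl hr
  have hmlt : m < p.2 := by omega
  refine NPos.intro (t := (rs.map (fun q => List.replicate q.2 q.1)).flatten
      ++ List.replicate m p.1)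
    ⟨(rs.map (fun q => List.replicate q.2 q.1)).flatten, p.1, p.2 - m,
      List.replicate m p.1, by omega, ?_, rfl⟩ hP
  rw [List.append_assoc, ← List.replicate_add]
  congr 2
  omega
end

section
/- Every complementary palindrome is a P-position of StrNim: if s = t · f(reverse(t)) for some string t and some bijective letter-to-letter map f on the alphabet with f(a) ≠ a for every letter a, then s is a P-position. -/
lemma strnim_main {α : Type*} (f g : α → α) (hgf : ∀ a, g (f a) = a)
    (hfg : ∀ a, f (g a) = a) (hfp : ∀ a : α, f a ≠ a) :
    ∀ (n : ℕ) (t : List α), t.length ≤ n → PPos (t ++ t.reverse.map f) := by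
  have hcgf : g ∘ f = id := funext hgf
  have hcfg : f ∘ g = id := funext hfg
  intro n
  induction n with
  | zero =>
    intro t ht u hu
    have ht0 : t = [] := List.eq_nil_of_length_eq_zero (Nat.le_zero.mp ht)
    subst ht0
    obtain ⟨x, c, k, y, hk, hs, -⟩ := hu
    have := congrArg List.length hs
    simp only [List.length_append, List.length_replicate, List.length_nil, List.length_map,
      List.length_reverse] at this
    omega
  | succ n ih =>
    intro t ht u hu
    obtain ⟨x, c, k, y', hk, hs, hu'⟩ := hu
    by_cases hA : x.length + k ≤ t.length
    · -- block in left half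
      have hpre : (x ++ List.replicate k c) <+: t :=
        List.prefix_of_prefix_length_le
          (by rw [hs]; exact List.prefix_append _ _)
          (List.prefix_append _ _) (by simpa using hA)
      obtain ⟨y, hty⟩ := hpre
      have hty' : t = x ++ List.replicate k c ++ y := by rw [← hty]
      have hy' : y' = y ++ List.map f t.reverse := by
        apply List.append_cancel_left (as := x ++ List.replicate k c)
        rw [← List.append_assoc, ← hs, hty']
      have hylen := congrArg List.length hty'
      simp only [List.length_append, List.length_replicate] at hylen
      refine NPos.intro (t := (x ++ y) ++ ((x ++ y).reverse.map f))
        ⟨x ++ y ++ (y.reverse.map f), f c, k, x.reverse.map f, hk, ?_, ?_⟩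
        (ih (x ++ y) (by simp; omega))
      · rw [hu', hy', hty']
        simp [List.reverse_append, List.map_replicate, List.append_assoc]
      · simp [List.reverse_append, List.append_assoc]
    · by_cases hB : t.length ≤ x.length
      · -- block in right half
        have hpre : t <+: x :=
          List.prefix_of_prefix_length_le (List.prefix_append _ _)
            (by rw [hs]
                exact (List.prefix_append _ _).trans (List.prefix_append _ _)) hB
        obtain ⟨x2, hx⟩ := hpre
        have hw2 : List.map f t.reverse = x2 ++ List.replicate k c ++ y' := by
          apply List.append_cancel_left (as := t)
          rw [hs, ← hx]; simp [List.append_assoc]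
        have hrt : t.reverse = List.map g x2 ++ List.replicate k (g c) ++ List.map g y' := by
          have h4 := congrArg (List.map g) hw2
          rw [List.map_map, hcgf, List.map_id] at h4
          simpa [List.map_replicate, List.append_assoc] using h4
        have hT : t = (List.map g y').reverse ++ List.replicate k (g c)
            ++ (List.map g x2).reverse := by
          have h5 := congrArg List.reverse hrt
          simpa [List.reverse_append, List.append_assoc] using h5
        have hlen2 := congrArg List.length hw2
        simp only [List.length_append, List.length_replicate, List.length_map,
          List.length_reverse] at hlen2
        refine NPos.intro
          (t := (List.map g (x2 ++ y')).reverse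
              ++ ((List.map g (x2 ++ y')).reverse.reverse.map f))
          ⟨(List.map g y').reverse, g c, k, (List.map g x2).reverse ++ x2 ++ y', hk, ?_, ?_⟩
          (ih (List.map g (x2 ++ y')).reverse (by simp; omega))
        · rw [hu', ← hx, hT]
          simp [List.append_assoc]
        · simp [List.reverse_append, List.map_map, hcfg, List.append_assoc]
      · -- straddling block: contradiction
        exfalso
        set j := t.length - x.length with hj
        have hsplit : List.replicate k c = List.replicate j c ++ List.replicate (k - j) c := by
          rw [← List.replicate_add]; congr 1; omega
        have hpre : (x ++ List.replicate j c) <+: (t ++ List.map f t.reverse) :=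
          ⟨List.replicate (k - j) c ++ y', by rw [hs, hsplit]; simp only [List.append_assoc]⟩
        have ht2 : t = x ++ List.replicate j c :=
          ((List.prefix_of_prefix_length_le hpre (List.prefix_append _ _)
            (by simp; omega)).eq_of_length (by simp; omega)).symm
        have hw2 : List.map f t.reverse = List.replicate (k - j) c ++ y' := by
          apply List.append_cancel_left (as := t)
          rw [hs]
          conv_rhs => rw [ht2]
          rw [hsplit]; simp only [List.append_assoc]
        have hcontr : List.replicate (k - j) c ++ y'
            = List.replicate j (f c) ++ List.map f x.reverse := by
          rw [← hw2, ht2]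
          simp [List.reverse_append, List.map_replicate]
        obtain ⟨a, ha⟩ : ∃ a, k - j = a + 1 := ⟨k - j - 1, by omega⟩
        obtain ⟨b, hb⟩ : ∃ b, j = b + 1 := ⟨j - 1, by omega⟩
        rw [ha, hb, List.replicate_succ, List.replicate_succ] at hcontr
        simp only [List.cons_append] at hcontr
        injection hcontr with h1 _
        exact hfp c h1.symm

/-- Every complementary palindrome `s = t · f(reverse t)`, for a fixed-point-free bijection `f`
on the alphabet, is a P-position. -/
theorem stmt_11 {α : Type*} (f : α → α) (hf : Function.Bijective f)
    (hfp : ∀ a : α, f a ≠ a) (t : List α) :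
    PPos (t ++ t.reverse.map f) := by
  obtain ⟨g, hgf, hfg⟩ := Function.bijective_iff_has_inverse.mp hf
  exact strnim_main f g hgf hfg hfp t.length t le_rfl
end

section
/- Let s be a square-free-runs string, i.e., s[i] ≠ s[i+1] for all 1 ≤ i < |s|. Then s is a P-position of StrNim if and only if |s| is even. -/
/-!
In a string without equal neighbours every move deletes a single letter, so it shortens the
string by one. If the string has odd length, deleting its first letter leaves an even-length string
of the same kind. If it has even length, every move can be answered by a move to an even-length
string of the same kind: either the move left no equal neighbours and the answer deletes the first
letter, or it made the two letters around the deleted one adjacent and equal, and deleting one of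
them removes the only equal pair. Induction on the length then shows that the P-positions are exactly the strings
of even length.
-/

open List

section

variable {α : Type*}

theorem NPos.not_ppos {s : List α} (h : NPos s) : ¬ PPos s := by
  induction h with
  | intro hst _ ih =>
    intro hs
    obtain ⟨htu, hu⟩ := hs _ hst
    exact ih _ htu hu

theorem strMove_cons (c : α) (s : List α) : StrMove (c :: s) s :=
  ⟨[], c, 1, s, le_rfl, rfl, rfl⟩

theorem not_ppos_cons_of_ppos {s : List α} (hs : PPos s) (c : α) : ¬ PPos (c :: s) :=
  fun hp => (hp s (strMove_cons c s)).not_ppos hs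

theorem StrMove.eq_append_cons_of_isChain {s t : List α} (hs : s.IsChain (· ≠ ·))
    (hm : StrMove s t) : ∃ x c y, s = x ++ c :: y ∧ t = x ++ y := by
  obtain ⟨x, c, _ | _ | k, y, hk, rfl, rfl⟩ := hm
  · omega
  · exact ⟨x, c, y, by simp, rfl⟩
  · simp [replicate_succ] at hs

theorem exists_strMove_isChain_of_isChain_append_cons {x y : List α} {c : α}
    (h : (x ++ c :: y).IsChain (· ≠ ·)) (hne : x ++ y ≠ []) :
    ∃ u, StrMove (x ++ y) u ∧ u.IsChain (· ≠ ·) ∧ u.length + 1 = (x ++ y).length := by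
  have hx : x.IsChain (· ≠ ·) := h.left_of_append
  have hy : y.IsChain (· ≠ ·) := h.right_of_append.tail
  by_cases hxy : (x ++ y).IsChain (· ≠ ·)
  · obtain ⟨d, t, hdt⟩ := exists_cons_of_ne_nil hne
    rw [hdt] at hxy ⊢
    exact ⟨t, strMove_cons d t, hxy.tail, rfl⟩
  · obtain ⟨a, ha, b, hb, rfl⟩ : ∃ a ∈ x.getLast?, ∃ b ∈ y.head?, a = b := by
      simpa [isChain_append, hx, hy] using hxy
    obtain ⟨y, rfl⟩ : ∃ y', y = a :: y' := by
      cases y with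
      | nil => simp at hb
      | cons d y' => exact ⟨y', by simpa using hb⟩
    refine ⟨x ++ y, ⟨x, a, 1, y, le_rfl, by simp, rfl⟩, hx.append hy.tail ?_, by simp; omega⟩
    rintro a' ha' b' hb'
    rw [Option.mem_unique ha' ha]
    exact isChain_cons.mp hy |>.1 b' hb'

end

/-- If `s` has no two equal adjacent characters, then `s` is a P-position iff `|s|` is even. -/
theorem stmt_13 {α : Type*} (s : List α) (h : s.Chain' (· ≠ ·)) :
    PPos s ↔ Even s.length := by
  induction hn : s.length using Nat.strong_induction_on generalizing s with
  | _ n ih =>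
  subst hn
  rcases Nat.even_or_odd s.length with heven | hodd
  · refine iff_of_true ?_ heven
    intro t hmove
    obtain ⟨x, c, y, rfl, rfl⟩ := hmove.eq_append_cons_of_isChain h
    have hne : x ++ y ≠ [] := by
      intro hxy
      simp [append_eq_nil_iff.mp hxy] at heven
    obtain ⟨u, hu, hchain, hlen⟩ := exists_strMove_isChain_of_isChain_append_cons h hne
    simp only [length_append, length_cons] at heven hlen
    refine NPos.intro hu ((ih u.length (by simp; omega) u hchain rfl).2 ?_)
    rw [Nat.even_iff] at heven ⊢
    omega
  · refine iff_of_false ?_ (Nat.not_even_iff_odd.2 hodd)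
    obtain ⟨c, s, rfl⟩ := exists_cons_of_ne_nil (ne_nil_of_length_pos hodd.pos)
    refine not_ppos_cons_of_ppos ((ih _ (by simp) s h.tail rfl).2 ?_) c
    simpa [Nat.odd_add_one] using hodd
end
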